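/- Under the Interacting Urns Design with the treatment-similarity update mechanism, for every fixed stratum h ∈ {1,…,H} and treatment j ∈ {1,…,J}: if N_{j,h,n} → ∞ almost surely, then P_{j,h,n} → θ_{j,h} almost surely as n → ∞. -/

import Mathlib

/-!
On the event `N_{j,h,n} → ∞`, the pooled proportion `P_{j,h,n}` is a weighted mean of stratum
estimates that all lie within `c_n` of `θ̂_{j,h,n}`, so it is enough to show `θ̂_{j,h,n} → θ_{j,h}`.
The centred responses `D_i = 1{Z_i = h, δ_i = j} (Y_i - θ_{j,h})` are martingale differences,
and so are `D_i / (1 + N_{j,h,i})`, the weight being known before step `i`. Their squares sum to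
at most a constant times `∑_i 1{Z_i = h, δ_i = j} / (1 + N_{j,h,i})^2 ≤ 2`, so their partial sums
form an `L²`-bounded martingale, which converges almost surely. Kronecker's lemma then gives
`(S_{j,h,n} - θ_{j,h} N_{j,h,n}) / (1 + N_{j,h,n}) → 0`.
-/

open MeasureTheory ProbabilityTheory Filter Finset Asymptotics
open scoped Topology

theorem kronecker_lemma {b x : ℕ → ℝ} {L : ℝ} (hpos : ∀ n, 0 < b n) (hmono : Monotone b)
    (htop : Tendsto b atTop atTop)
    (hx : Tendsto (fun n => ∑ i ∈ range n, x i / b i) atTop (𝓝 L)) :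
    Tendsto (fun n => (∑ i ∈ range n, x i) / b n) atTop (𝓝 0) := by
  set s : ℕ → ℝ := fun n => ∑ i ∈ range n, x i / b i - L
  have hs : Tendsto s atTop (𝓝 0) := tendsto_sub_nhds_zero_iff.2 hx
  have habel : ∀ n, ∑ i ∈ range n, x i
      = b n * s n - b 0 * s 0 - ∑ i ∈ range n, (b (i + 1) - b i) * s (i + 1) := by
    intro n
    induction n with
    | zero => simp
    | succ n ih =>
      have hxn : x n = b n * (s (n + 1) - s n) := by
        simp only [s, sum_range_succ]
        field_simp [(hpos n).ne']
        ring
      rw [sum_range_succ, ih, sum_range_succ, hxn]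
      ring
  have htail : (fun n => ∑ i ∈ range n, (b (i + 1) - b i) * s (i + 1)) =o[atTop] b := by
    have hinc : (fun i => (b (i + 1) - b i) * s (i + 1)) =o[atTop] fun i => b (i + 1) - b i := by
      simpa using (isBigO_refl (fun i => b (i + 1) - b i) atTop).mul_isLittleO
        ((isLittleO_one_iff ℝ).2 (hs.comp (tendsto_add_atTop_nat 1)))
    have hsum := hinc.sum_range (fun i => sub_nonneg.2 (hmono i.le_succ))
      (by simp_rw [sum_range_sub, sub_eq_add_neg]; exact tendsto_atTop_add_const_right _ _ htop)
    refine hsum.trans_isBigO (IsBigO.of_bound 1 (Eventually.of_forall fun n => ?_))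
    rw [sum_range_sub, one_mul, Real.norm_of_nonneg (hpos n).le, Real.norm_eq_abs, abs_le]
    constructor <;> linarith [hpos 0, hpos n, hmono (Nat.zero_le n)]
  have hlim := (hs.sub ((tendsto_const_nhds (x := b 0 * s 0)).div_atTop htop)).sub
    htail.tendsto_div_nhds_zero
  simp only [sub_zero] at hlim
  refine hlim.congr fun n => ?_
  rw [habel n]
  field_simp [(hpos n).ne']

theorem tendsto_div_of_tendsto_sub_mul_div_one_add {S N : ℕ → ℝ} {a : ℝ}
    (hN : Tendsto N atTop atTop)
    (h : Tendsto (fun n => (S n - a * N n) / (1 + N n)) atTop (𝓝 0)) :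
    Tendsto (fun n => S n / N n) atTop (𝓝 a) := by
  have hratio : Tendsto (fun n => (N n)⁻¹ + 1) atTop (𝓝 1) := by
    simpa using hN.inv_tendsto_atTop.add_const 1
  have hlim := (h.mul hratio).const_add a
  rw [zero_mul, add_zero] at hlim
  refine hlim.congr' ?_
  filter_upwards [hN.eventually_gt_atTop 0] with n hn
  field_simp
  ring

theorem sum_range_div_one_add_sum_sq_le_two {a : ℕ → ℝ} (h0 : ∀ i, 0 ≤ a i) (h1 : ∀ i, a i ≤ 1)
    (n : ℕ) : ∑ i ∈ range n, a i / (1 + ∑ k ∈ range i, a k) ^ 2 ≤ 2 := by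
  suffices ∑ i ∈ range n, a i / (1 + ∑ k ∈ range i, a k) ^ 2
      ≤ 2 - 2 / (1 + ∑ k ∈ range n, a k) by
    have : 0 ≤ 2 / (1 + ∑ k ∈ range n, a k) := by
      have := sum_nonneg fun k (_ : k ∈ range n) => h0 k
      positivity
    linarith
  induction n with
  | zero => norm_num
  | succ n ih =>
    set t := ∑ k ∈ range n, a k
    have ht : 0 ≤ t := sum_nonneg fun k _ => h0 k
    -- telescoping `2 / (1 + t)`; the factor `2` absorbs `1 + t + a n ≤ 2 (1 + t)`
    have hstep : a n / (1 + t) ^ 2 ≤ 2 / (1 + t) - 2 / (1 + (t + a n)) := by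
      rw [div_sub_div _ _ (by positivity) (by linarith [h0 n]), div_le_div_iff₀ (by positivity)
        (by nlinarith [h0 n])]
      nlinarith [h0 n, h1 n, mul_nonneg (h0 n) ht, mul_nonneg (mul_nonneg (h0 n) ht) ht]
    rw [sum_range_succ, sum_range_succ]
    linarith

theorem abs_sum_div_sum_sub_le {ι : Type*} (s : Finset ι) {S N : ι → ℝ} {a c : ℝ}
    (hN : 0 < ∑ k ∈ s, N k) (h : ∀ k ∈ s, |S k - a * N k| ≤ c * N k) :
    |(∑ k ∈ s, S k) / (∑ k ∈ s, N k) - a| ≤ c := by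
  rw [div_sub' hN.ne', abs_div, abs_of_pos hN, div_le_iff₀ hN]
  calc |∑ k ∈ s, S k - (∑ k ∈ s, N k) * a| = |∑ k ∈ s, (S k - a * N k)| := by
        rw [sum_sub_distrib, sum_mul]; simp_rw [mul_comm]
    _ ≤ ∑ k ∈ s, |S k - a * N k| := abs_sum_le_sum_abs _ _
    _ ≤ ∑ k ∈ s, c * N k := sum_le_sum h
    _ = c * ∑ k ∈ s, N k := (mul_sum _ _ _).symm

theorem abs_sub_mul_le_of_abs_div_sub_le {S N a c : ℝ} (hN : 0 ≤ N) (hS : N = 0 → S = 0)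
    (h : |S / N - a| ≤ c) : |S - a * N| ≤ c * N := by
  rcases hN.eq_or_lt with hN0 | hNpos
  · simp [← hN0, hS hN0.symm]
  · calc |S - a * N| = |S / N - a| * N := by
          rw [← abs_of_pos hNpos, ← abs_mul, abs_of_pos hNpos, sub_mul, div_mul_cancel₀ _ hNpos.ne']
      _ ≤ c * N := mul_le_mul_of_nonneg_right h hN

theorem abs_pooled_sub_le {ι : Type*} [DecidableEq ι] {s : Finset ι} {h : ι} (hh : h ∉ s)
    {S N θhat : ι → ℝ} {c : ℝ} (hc : 0 ≤ c) (hS0 : ∀ k, 0 ≤ S k) (hSN : ∀ k, S k ≤ N k)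
    (hθhat : ∀ k, θhat k = S k / N k) (hNh : 0 < N h) (hs : ∀ k ∈ s, |θhat k - θhat h| ≤ c) :
    |(S h + ∑ k ∈ s, S k) / (N h + ∑ k ∈ s, N k) - θhat h| ≤ c := by
  rw [← sum_insert hh, ← sum_insert (f := N) hh]
  refine abs_sum_div_sum_sub_le _ ?_ fun k hk => ?_
  · rw [sum_insert hh]
    exact add_pos_of_pos_of_nonneg hNh (sum_nonneg fun k _ => (hS0 k).trans (hSN k))
  · refine abs_sub_mul_le_of_abs_div_sub_le ((hS0 k).trans (hSN k))
      (fun hN0 => le_antisymm (hN0 ▸ hSN k) (hS0 k)) ?_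
    rcases mem_insert.1 hk with rfl | hk
    · rw [← hθhat, sub_self, abs_zero]; exact hc
    · rw [← hθhat]; exact hs k hk

section FiniteMeasure

variable {Ω : Type*} {m m' m0 : MeasurableSpace Ω} {μ : Measure Ω} [IsFiniteMeasure μ]
  {ℱ : Filtration ℕ m0} {W : ℕ → Ω → ℝ} {C : ℝ}

theorem integrable_of_abs_le {f : Ω → ℝ} (hm : m ≤ m0)
    (hf : StronglyMeasurable[m] f) (hC : ∀ ω, |f ω| ≤ C) : Integrable f μ :=
  .of_bound (hf.mono hm).aestronglyMeasurable C (ae_of_all _ hC)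

theorem integrable_sq_of_abs_le {f : Ω → ℝ} (hm : m ≤ m0)
    (hf : StronglyMeasurable[m] f) (hC : ∀ ω, |f ω| ≤ C) : Integrable (fun ω => f ω ^ 2) μ :=
  integrable_of_abs_le hm (hf.pow 2) (C := C ^ 2) fun ω => by
    rw [abs_pow]; exact pow_le_pow_left₀ (abs_nonneg _) (hC ω) 2

theorem integral_mul_eq_zero_of_condExp_eq_zero (hm : m ≤ m0) {f g : Ω → ℝ}
    (hf : StronglyMeasurable[m] f) (hfg : Integrable (f * g) μ) (hg : Integrable g μ)
    (hg0 : μ[g | m] =ᵐ[μ] 0) : ∫ ω, f ω * g ω ∂μ = 0 := by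
  have hfg0 : μ[f * g | m] =ᵐ[μ] 0 := by
    filter_upwards [condExp_mul_of_stronglyMeasurable_left hf hfg hg, hg0] with ω h1 h2
    simp [h1, h2]
  change ∫ ω, (f * g) ω ∂μ = 0
  rw [← integral_condExp hm, integral_congr_ae hfg0, Pi.zero_def, integral_zero]

theorem condExp_indicator_sub_eq_zero (hmm' : m ≤ m') (hm' : m' ≤ m0) {s : Set Ω}
    (hs : MeasurableSet[m'] s) {Y : Ω → ℝ} (hY : Integrable Y μ) {a : ℝ}
    (hYa : ∀ᵐ ω ∂μ, ω ∈ s → μ[Y | m'] ω = a) :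
    μ[s.indicator (fun ω => Y ω - a) | m] =ᵐ[μ] 0 := by
  have h' : μ[s.indicator (fun ω => Y ω - a) | m'] =ᵐ[μ] 0 := by
    filter_upwards [condExp_indicator (hY.sub (integrable_const a)) hs,
      condExp_sub hY (integrable_const a) m', hYa] with ω h1 h2 h3
    change μ[s.indicator (Y - fun _ => a) | m'] ω = 0
    rw [h1]
    by_cases hω : ω ∈ s
    · simp [Set.indicator_of_mem hω, h2, condExp_const hm', h3 hω]
    · simp [Set.indicator_of_notMem hω]
  calc μ[s.indicator (fun ω => Y ω - a) | m]
      =ᵐ[μ] μ[μ[s.indicator (fun ω => Y ω - a) | m'] | m] := (condExp_condExp_of_le hmm' hm').symm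
    _ =ᵐ[μ] μ[(0 : Ω → ℝ) | m] := condExp_congr_ae h'
    _ = 0 := condExp_zero

theorem stronglyMeasurable_sum_range (hW : ∀ i, StronglyMeasurable[ℱ (i + 1)] (W i)) (n : ℕ) :
    StronglyMeasurable[ℱ n] fun ω => ∑ i ∈ range n, W i ω :=
  Finset.stronglyMeasurable_fun_sum _ fun i hi => (hW i).mono (ℱ.mono (mem_range.1 hi))

theorem abs_sum_range_le (hC : ∀ i ω, |W i ω| ≤ C) (n : ℕ) (ω : Ω) :
    |∑ i ∈ range n, W i ω| ≤ n * C :=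
  (abs_sum_le_sum_abs _ _).trans (by simpa using sum_le_sum fun i (_ : i ∈ range n) => hC i ω)

theorem integral_sq_sum_range (hW : ∀ i, StronglyMeasurable[ℱ (i + 1)] (W i))
    (hC : ∀ i ω, |W i ω| ≤ C) (hW0 : ∀ i, μ[W i | ℱ i] =ᵐ[μ] 0) (n : ℕ) :
    ∫ ω, (∑ i ∈ range n, W i ω) ^ 2 ∂μ = ∑ i ∈ range n, ∫ ω, W i ω ^ 2 ∂μ := by
  induction n with
  | zero => simp
  | succ n ih =>
    have hM := stronglyMeasurable_sum_range hW n
    have hMn := abs_sum_range_le hC n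
    have hint_sq : Integrable (fun ω => (∑ i ∈ range n, W i ω) ^ 2) μ :=
      integrable_sq_of_abs_le (ℱ.le n) hM hMn
    have hint_W : Integrable (W n) μ := integrable_of_abs_le (ℱ.le _) (hW n) (hC n)
    have hint_MW : Integrable (fun ω => (∑ i ∈ range n, W i ω) * W n ω) μ :=
      integrable_of_abs_le (ℱ.le _) ((hM.mono (ℱ.mono n.le_succ)).mul (hW n)) (C := n * C * C)
        fun ω => by
          rw [abs_mul]
          exact mul_le_mul (hMn ω) (hC n ω) (abs_nonneg _) ((abs_nonneg _).trans (hMn ω))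
    have hint_W2 : Integrable (fun ω => W n ω ^ 2) μ :=
      integrable_sq_of_abs_le (ℱ.le _) (hW n) (hC n)
    have horth : ∫ ω, (∑ i ∈ range n, W i ω) * W n ω ∂μ = 0 :=
      integral_mul_eq_zero_of_condExp_eq_zero (ℱ.le n) hM hint_MW hint_W (hW0 n)
    calc ∫ ω, (∑ i ∈ range (n + 1), W i ω) ^ 2 ∂μ
        = ∫ ω, ((∑ i ∈ range n, W i ω) ^ 2 + 2 * ((∑ i ∈ range n, W i ω) * W n ω))
            + W n ω ^ 2 ∂μ := by simp_rw [sum_range_succ]; ring_nf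
      _ = ∑ i ∈ range (n + 1), ∫ ω, W i ω ^ 2 ∂μ := by
        have hint_sum : Integrable (fun ω => (∑ i ∈ range n, W i ω) ^ 2
            + 2 * ((∑ i ∈ range n, W i ω) * W n ω)) μ := hint_sq.add (hint_MW.const_mul 2)
        rw [integral_add hint_sum hint_W2,
          integral_add hint_sq (hint_MW.const_mul 2), integral_const_mul, horth, ih,
          sum_range_succ]
        ring

theorem martingale_sum_range (hW : ∀ i, StronglyMeasurable[ℱ (i + 1)] (W i))
    (hC : ∀ i ω, |W i ω| ≤ C) (hW0 : ∀ i, μ[W i | ℱ i] =ᵐ[μ] 0) :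
    Martingale (fun n ω => ∑ i ∈ range n, W i ω) ℱ μ :=
  martingale_of_condExp_sub_eq_zero_nat (stronglyMeasurable_sum_range hW)
    (fun n => integrable_of_abs_le (ℱ.le n) (stronglyMeasurable_sum_range hW n)
      (abs_sum_range_le hC n))
    fun n => by
      convert hW0 n using 2
      ext ω
      simp [sum_range_succ]

end FiniteMeasure

section ProbabilityMeasure

variable {Ω : Type*} {m0 : MeasurableSpace Ω} {μ : Measure Ω} [IsProbabilityMeasure μ]
  {ℱ : Filtration ℕ m0} {W : ℕ → Ω → ℝ} {C : ℝ}

theorem ae_tendsto_sum_range_of_sum_sq_le (hW : ∀ i, StronglyMeasurable[ℱ (i + 1)] (W i))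
    (hC : ∀ i ω, |W i ω| ≤ C) (hW0 : ∀ i, μ[W i | ℱ i] =ᵐ[μ] 0) {K : ℝ}
    (hK : ∀ n ω, ∑ i ∈ range n, W i ω ^ 2 ≤ K) :
    ∀ᵐ ω ∂μ, ∃ L, Tendsto (fun n => ∑ i ∈ range n, W i ω) atTop (𝓝 L) := by
  set M : ℕ → Ω → ℝ := fun n ω => ∑ i ∈ range n, W i ω
  have hMint : ∀ n, Integrable (M n) μ := fun n =>
    integrable_of_abs_le (ℱ.le n) (stronglyMeasurable_sum_range hW n) (abs_sum_range_le hC n)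
  have hsq : ∀ n, ∫ ω, M n ω ^ 2 ∂μ ≤ K := fun n => by
    have hW2 : ∀ i ∈ range n, Integrable (fun ω => W i ω ^ 2) μ := fun i _ =>
      integrable_sq_of_abs_le (ℱ.le _) (hW i) (hC i)
    calc ∫ ω, M n ω ^ 2 ∂μ = ∫ ω, ∑ i ∈ range n, W i ω ^ 2 ∂μ := by
          rw [integral_sq_sum_range hW hC hW0, integral_finsetSum _ hW2]
      _ ≤ ∫ _, K ∂μ := integral_mono (integrable_finsetSum _ hW2) (integrable_const K) (hK n)
      _ = K := by simp
  -- `|x| ≤ (x ^ 2 + 1) / 2` turns the `L²` bound into an `L¹` bound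
  have hL1 : ∀ n, eLpNorm (M n) 1 μ ≤ ((K + 1) / 2).toNNReal := fun n => by
    rw [eLpNorm_one_eq_lintegral_enorm, ← ofReal_integral_norm_eq_lintegral_enorm (hMint n)]
    refine ENNReal.ofReal_le_ofReal ?_
    have hM2 : Integrable (fun ω => M n ω ^ 2) μ :=
      integrable_sq_of_abs_le (ℱ.le n) (stronglyMeasurable_sum_range hW n) (abs_sum_range_le hC n)
    calc ∫ ω, ‖M n ω‖ ∂μ ≤ ∫ ω, (M n ω ^ 2 + 1) / 2 ∂μ :=
          integral_mono (hMint n).norm ((hM2.add (integrable_const 1)).div_const 2) fun ω => by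
            rw [Real.norm_eq_abs]
            nlinarith [sq_abs (M n ω), sq_nonneg (|M n ω| - 1)]
      _ = (∫ ω, M n ω ^ 2 ∂μ + 1) / 2 := by
          rw [integral_div, integral_add hM2 (integrable_const 1)]
          simp
      _ ≤ (K + 1) / 2 := by linarith [hsq n]
  have hM := martingale_sum_range hW hC hW0
  filter_upwards [hM.submartingale.ae_tendsto_limitProcess hL1] with ω hω
  exact ⟨_, hω⟩

theorem ae_tendsto_sum_div_one_add_sum {D w : ℕ → Ω → ℝ}
    (hD : ∀ i, StronglyMeasurable[ℱ (i + 1)] (D i)) (hD0 : ∀ i, μ[D i | ℱ i] =ᵐ[μ] 0)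
    (hw : ∀ i, StronglyMeasurable[ℱ (i + 1)] (w i)) (hw0 : ∀ i ω, 0 ≤ w i ω)
    (hw1 : ∀ i ω, w i ω ≤ 1) (hDw : ∀ i ω, |D i ω| ≤ C * w i ω) :
    ∀ᵐ ω ∂μ, ∃ L, Tendsto (fun n => ∑ i ∈ range n, D i ω / (1 + ∑ k ∈ range i, w k ω))
      atTop (𝓝 L) := by
  set N : ℕ → Ω → ℝ := fun i ω => ∑ k ∈ range i, w k ω
  have hN0 : ∀ i ω, 0 < 1 + N i ω := fun i ω => by
    linarith [sum_nonneg fun k (_ : k ∈ range i) => hw0 k ω]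
  -- normalising by `1 + N i`, which is known at time `i`, keeps the increments centred
  set W : ℕ → Ω → ℝ := fun i ω => (1 + N i ω)⁻¹ * D i ω
  have hinv : ∀ i, StronglyMeasurable[ℱ i] fun ω => (1 + N i ω)⁻¹ := fun i =>
    ((stronglyMeasurable_sum_range hw i).measurable.const_add 1).inv.stronglyMeasurable
  have hW : ∀ i, StronglyMeasurable[ℱ (i + 1)] (W i) := fun i =>
    ((hinv i).mono (ℱ.mono i.le_succ)).mul (hD i)
  have hDC : ∀ i ω, |D i ω| ≤ |C| := fun i ω =>
    (hDw i ω).trans ((mul_le_mul_of_nonneg_right (le_abs_self C) (hw0 i ω)).trans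
      (mul_le_of_le_one_right (abs_nonneg C) (hw1 i ω)))
  have hWC : ∀ i ω, |W i ω| ≤ |C| := fun i ω => by
    rw [abs_mul, abs_of_pos (inv_pos.2 (hN0 i ω))]
    exact (mul_le_of_le_one_left (abs_nonneg _) (inv_le_one_of_one_le₀
      (by linarith [hN0 i ω, sum_nonneg fun k (_ : k ∈ range i) => hw0 k ω]))).trans (hDC i ω)
  have hW0 : ∀ i, μ[W i | ℱ i] =ᵐ[μ] 0 := fun i => by
    filter_upwards [condExp_mul_of_stronglyMeasurable_left (hinv i)
      (integrable_of_abs_le (ℱ.le _) (hW i) (hWC i))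
      (integrable_of_abs_le (ℱ.le _) (hD i) (hDC i)), hD0 i] with ω h1 h2
    change μ[(fun ω => (1 + N i ω)⁻¹) * D i | ℱ i] ω = 0
    rw [h1, Pi.mul_apply, h2, Pi.zero_apply, mul_zero]
  have hK : ∀ n ω, ∑ i ∈ range n, W i ω ^ 2 ≤ C ^ 2 * 2 := fun n ω => by
    calc ∑ i ∈ range n, W i ω ^ 2 ≤ ∑ i ∈ range n, C ^ 2 * (w i ω / (1 + N i ω) ^ 2) :=
          sum_le_sum fun i _ => by
            rw [show W i ω ^ 2 = D i ω ^ 2 / (1 + N i ω) ^ 2 by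
              simp only [W, mul_pow, inv_pow, div_eq_inv_mul], mul_div_assoc']
            refine div_le_div_of_nonneg_right ?_ (sq_nonneg _)
            calc D i ω ^ 2 ≤ (C * w i ω) ^ 2 := by
                  rw [← sq_abs]; exact pow_le_pow_left₀ (abs_nonneg _) (hDw i ω) 2
              _ ≤ C ^ 2 * w i ω := by
                  rw [mul_pow]
                  exact mul_le_mul_of_nonneg_left (pow_le_of_le_one (hw0 i ω) (hw1 i ω)
                    two_ne_zero) (sq_nonneg C)
      _ ≤ C ^ 2 * 2 := by
          rw [← mul_sum]
          exact mul_le_mul_of_nonneg_left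
            (sum_range_div_one_add_sum_sq_le_two (hw0 · ω) (hw1 · ω) n) (sq_nonneg _)
  filter_upwards [ae_tendsto_sum_range_of_sum_sq_le hW hWC hW0 hK] with ω ⟨L, hL⟩
  exact ⟨L, hL.congr fun n => sum_congr rfl fun i _ => inv_mul_eq_div _ _⟩

theorem ae_tendsto_sum_indicator_div_sum_indicator {𝒢 : ℕ → MeasurableSpace Ω}
    (hℱ𝒢 : ∀ i, ℱ i ≤ 𝒢 i) (h𝒢ℱ : ∀ i, 𝒢 i ≤ ℱ (i + 1))
    {A : ℕ → Set Ω} (hA : ∀ i, MeasurableSet[𝒢 i] (A i))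
    {Y : ℕ → Ω → ℝ} (hY : ∀ i, StronglyMeasurable[ℱ (i + 1)] (Y i))
    (hYC : ∀ i ω, |Y i ω| ≤ C) {a : ℝ} (hYa : ∀ i, ∀ᵐ ω ∂μ, ω ∈ A i → μ[Y i | 𝒢 i] ω = a) :
    ∀ᵐ ω ∂μ, Tendsto (fun n => ∑ i ∈ range n, (A i).indicator (1 : Ω → ℝ) ω) atTop atTop →
      Tendsto (fun n => (∑ i ∈ range n, (A i).indicator (Y i) ω) /
        ∑ i ∈ range n, (A i).indicator (1 : Ω → ℝ) ω) atTop (𝓝 a) := by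
  set I : ℕ → Ω → ℝ := fun i => (A i).indicator 1
  set D : ℕ → Ω → ℝ := fun i => (A i).indicator fun ω => Y i ω - a
  have hAℱ : ∀ i, MeasurableSet[ℱ (i + 1)] (A i) := fun i => h𝒢ℱ i _ (hA i)
  have hI0 : ∀ i ω, 0 ≤ I i ω := fun i => Set.indicator_nonneg fun _ _ => zero_le_one
  have hDI : ∀ i ω, |D i ω| ≤ (C + |a|) * I i ω := fun i ω => by
    by_cases hω : ω ∈ A i
    · simp only [D, I, Set.indicator_of_mem hω, Pi.one_apply, mul_one]
      exact (abs_sub _ _).trans (add_le_add_left (hYC i ω) _)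
    · simp [D, I, Set.indicator_of_notMem hω]
  have hD0 : ∀ i, μ[D i | ℱ i] =ᵐ[μ] 0 := fun i =>
    condExp_indicator_sub_eq_zero (hℱ𝒢 i) ((h𝒢ℱ i).trans (ℱ.le _)) (hA i)
      (integrable_of_abs_le (ℱ.le _) (hY i) (hYC i)) (hYa i)
  filter_upwards [ae_tendsto_sum_div_one_add_sum
    (fun i => ((hY i).sub stronglyMeasurable_const).indicator (hAℱ i)) hD0
    (fun i => stronglyMeasurable_const.indicator (hAℱ i)) hI0
    (fun i => Set.indicator_le_self' fun _ _ => zero_le_one) hDI] with ω ⟨L, hL⟩ hNω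
  refine tendsto_div_of_tendsto_sub_mul_div_one_add hNω ?_
  have hkron := kronecker_lemma (b := fun n => 1 + ∑ i ∈ range n, I i ω) (x := fun i => D i ω)
    (fun n => by linarith [sum_nonneg fun i (_ : i ∈ range n) => hI0 i ω])
    (monotone_nat_of_le_succ fun n => by simpa [sum_range_succ] using hI0 n ω)
    (tendsto_atTop_add_const_left _ 1 hNω) hL
  refine hkron.congr fun n => ?_
  simp only [D, mul_sum, ← sum_sub_distrib]
  congr 1
  refine sum_congr rfl fun i _ => ?_
  by_cases hω : ω ∈ A i <;> simp [hω]

end ProbabilityMeasure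

section Filtrations

variable {Ω : Type*} {m m0 : MeasurableSpace Ω}

theorem MeasurableSpace.comap_top_le_of_countable_range {α : Type*} [MeasurableSpace α]
    [MeasurableSingletonClass α] {f : Ω → α} (hf : Measurable[m] f)
    (hrange : (Set.range f).Countable) :
    MeasurableSpace.comap f ⊤ ≤ m := by
  rintro _ ⟨t, -, rfl⟩
  have : f ⁻¹' t = f ⁻¹' (t ∩ Set.range f) := by
    ext ω; simp
  rw [this]
  exact hf (hrange.mono Set.inter_subset_right).measurableSet

def pastFiltration (G : ℕ → MeasurableSpace Ω) (hG : ∀ i, G i ≤ m0) : Filtration ℕ m0 where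
  seq n := ⨆ i ∈ range n, G i
  mono' _ _ hab := biSup_mono fun _ hi => mem_range.2 ((mem_range.1 hi).trans_le hab)
  le' _ := iSup₂_le fun i _ => hG i

theorem le_pastFiltration {G : ℕ → MeasurableSpace Ω} (hG : ∀ i, G i ≤ m0) {i n : ℕ}
    (hin : i < n) : G i ≤ pastFiltration G hG n :=
  le_biSup G (mem_range.2 hin)

end Filtrations

theorem ae_tendsto_sum_ite_div_sum_ite {Ω α β : Type*} [MeasurableSpace Ω] {μ : Measure Ω}
    [IsProbabilityMeasure μ] [MeasurableSpace α] [MeasurableSingletonClass α] [Countable α]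
    [DecidableEq α] [MeasurableSpace β] [MeasurableSingletonClass β] [Countable β] [DecidableEq β]
    {Z : ℕ → Ω → α} {δ : ℕ → Ω → β} {Y : ℕ → Ω → ℝ}
    (hZmeas : ∀ i, Measurable (Z i)) (hδmeas : ∀ i, Measurable (δ i))
    (hYmeas : ∀ i, Measurable (Y i)) (hY01 : ∀ i ω, Y i ω = 0 ∨ Y i ω = 1)
    {𝓕 : ℕ → MeasurableSpace Ω}
    (h𝓕 : ∀ n, 𝓕 n = ⨆ i ∈ range n, (MeasurableSpace.comap (Z i) ⊤
      ⊔ MeasurableSpace.comap (δ i) ⊤ ⊔ MeasurableSpace.comap (Y i) ⊤))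
    {θ : β → α → ℝ} (hYcond : ∀ i, μ[Y i | 𝓕 i ⊔ MeasurableSpace.comap (fun ω => (Z i ω, δ i ω)) ⊤]
        =ᵐ[μ] fun ω => θ (δ i ω) (Z i ω))
    (j : β) (h : α) :
    ∀ᵐ ω ∂μ, Tendsto (fun n => ∑ i ∈ range n, if Z i ω = h ∧ δ i ω = j then (1 : ℝ) else 0)
        atTop atTop →
      Tendsto (fun n => (∑ i ∈ range n, if Z i ω = h ∧ δ i ω = j then Y i ω else 0) /
        ∑ i ∈ range n, if Z i ω = h ∧ δ i ω = j then (1 : ℝ) else 0) atTop (𝓝 (θ j h)) := by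
  set G : ℕ → MeasurableSpace Ω := fun i => MeasurableSpace.comap (Z i) ⊤
    ⊔ MeasurableSpace.comap (δ i) ⊤ ⊔ MeasurableSpace.comap (Y i) ⊤
  have hG : ∀ i, G i ≤ ‹MeasurableSpace Ω› := fun i =>
    sup_le (sup_le (MeasurableSpace.comap_top_le_of_countable_range (hZmeas i)
        (Set.to_countable _))
      (MeasurableSpace.comap_top_le_of_countable_range (hδmeas i) (Set.to_countable _)))
      (MeasurableSpace.comap_top_le_of_countable_range (hYmeas i)
        ((Set.toFinite {0, 1}).subset (Set.range_subset_iff.2 fun ω => hY01 i ω)).countable)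
  set ℱ := pastFiltration G hG
  have hℱ : ∀ n, ℱ n = 𝓕 n := fun n => (h𝓕 n).symm
  have hZδ : ∀ i, MeasurableSpace.comap (fun ω => (Z i ω, δ i ω)) ⊤ ≤ ℱ (i + 1) := fun i =>
    (MeasurableSpace.comap_top_le_of_countable_range (m := G i)
      (((comap_measurable (Z i)).mono
          ((MeasurableSpace.comap_mono le_top).trans (le_sup_left.trans le_sup_left)) le_rfl).prodMk
        ((comap_measurable (δ i)).mono
          ((MeasurableSpace.comap_mono le_top).trans (le_sup_right.trans le_sup_left)) le_rfl))
      (Set.to_countable _)).trans (le_pastFiltration hG i.lt_succ_self)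
  set 𝒢 : ℕ → MeasurableSpace Ω := fun i =>
    𝓕 i ⊔ MeasurableSpace.comap (fun ω => (Z i ω, δ i ω)) ⊤
  have hA : ∀ i, MeasurableSet[𝒢 i] {ω | Z i ω = h ∧ δ i ω = j} := fun i =>
    le_sup_right (a := 𝓕 i) _ (MeasurableSpace.measurableSet_comap.2
      ⟨{(h, j)}, trivial, by ext ω; simp [Prod.ext_iff]⟩)
  have hY : ∀ i, StronglyMeasurable[ℱ (i + 1)] (Y i) := fun i =>
    ((comap_measurable (Y i)).mono ((MeasurableSpace.comap_mono le_top).trans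
      (le_sup_right.trans (le_pastFiltration hG i.lt_succ_self))) le_rfl).stronglyMeasurable
  have := ae_tendsto_sum_indicator_div_sum_indicator (μ := μ) (fun i => hℱ i ▸ le_sup_left)
    (fun i => sup_le (hℱ i ▸ ℱ.mono i.le_succ) (hZδ i)) hA hY (C := 1)
    (fun i ω => by rcases hY01 i ω with hy | hy <;> simp [hy])
    (a := θ j h) (fun i => by
      filter_upwards [hYcond i] with ω hω hωA
      rw [hω, hωA.1, hωA.2])
  simpa only [Set.indicator_apply, Set.mem_ofPred_eq, Pi.one_apply] using this

theorem stmt10_general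
    {Ω : Type*} [MeasurableSpace Ω] (μ : Measure Ω) [IsProbabilityMeasure μ]
    (H J : ℕ)
    (Z : ℕ → Ω → Fin H) (δ : ℕ → Ω → Fin J) (Y : ℕ → Ω → ℝ)
    (hZmeas : ∀ i, Measurable (Z i)) (hδmeas : ∀ i, Measurable (δ i))
    (hYmeas : ∀ i, Measurable (Y i))
    (hY01 : ∀ i ω, Y i ω = 0 ∨ Y i ω = 1)
    (𝓕 : ℕ → MeasurableSpace Ω)
    (h𝓕 : ∀ n, 𝓕 n = ⨆ i ∈ Finset.range n,
      (MeasurableSpace.comap (Z i) ⊤ ⊔ MeasurableSpace.comap (δ i) ⊤ ⊔ MeasurableSpace.comap (Y i) ⊤))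
    (θ : Fin J → Fin H → ℝ)
    (hYcond : ∀ i, μ[Y i | 𝓕 i ⊔ MeasurableSpace.comap (fun ω => (Z i ω, δ i ω)) ⊤]
        =ᵐ[μ] fun ω => θ (δ i ω) (Z i ω))
    (S N : Fin J → Fin H → ℕ → Ω → ℝ)
    (hS : ∀ j h n ω, S j h n ω = ∑ i ∈ Finset.range n, if Z i ω = h ∧ δ i ω = j then Y i ω else 0)
    (hN : ∀ j h n ω, N j h n ω = ∑ i ∈ Finset.range n, if Z i ω = h ∧ δ i ω = j then 1 else 0)
    (θhat : Fin J → Fin H → ℕ → Ω → ℝ)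
    (hθhat : ∀ j h n ω, θhat j h n ω = S j h n ω / N j h n ω)
    (c : ℕ → ℝ) (hcpos : ∀ n, 0 < c n)
    (hclim : Tendsto c atTop (nhds 0))
    (P : Fin J → Fin H → ℕ → Ω → ℝ)
    (hP : ∀ j h n ω,
      P j h n ω =
        if N j h n ω + ∑ k ∈ (Finset.univ.erase h).filter
            (fun k => |θhat j k n ω - θhat j h n ω| ≤ c n), N j k n ω = 0 then 1/2
        else (S j h n ω + ∑ k ∈ (Finset.univ.erase h).filter
            (fun k => |θhat j k n ω - θhat j h n ω| ≤ c n), S j k n ω) /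
          (N j h n ω + ∑ k ∈ (Finset.univ.erase h).filter
            (fun k => |θhat j k n ω - θhat j h n ω| ≤ c n), N j k n ω))
    :
    ∀ (j : Fin J) (h : Fin H),
      (∀ᵐ ω ∂μ, Tendsto (fun n => N j h n ω) atTop atTop) →
      ∀ᵐ ω ∂μ, Tendsto (fun n => P j h n ω) atTop (nhds (θ j h)) := by
  intro j h hNtop
  have hθhat' := ae_tendsto_sum_ite_div_sum_ite (μ := μ) hZmeas hδmeas hYmeas hY01 h𝓕 hYcond j h
  simp only [← hS, ← hN, ← hθhat] at hθhat'
  have hS0 : ∀ k n ω, 0 ≤ S j k n ω := fun k n ω => by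
    rw [hS]
    exact sum_nonneg fun i _ => by split_ifs <;> rcases hY01 i ω with hy | hy <;> simp [hy]
  have hSN : ∀ k n ω, S j k n ω ≤ N j k n ω := fun k n ω => by
    rw [hS, hN]
    exact sum_le_sum fun i _ => by split_ifs <;> rcases hY01 i ω with hy | hy <;> simp [hy]
  filter_upwards [hNtop, hθhat'] with ω hNω hθω
  have hclose : ∀ᶠ n in atTop, ‖P j h n ω - θhat j h n ω‖ ≤ c n := by
    filter_upwards [hNω.eventually_gt_atTop 0] with n hn
    rw [Real.norm_eq_abs, hP, if_neg (add_pos_of_pos_of_nonneg hn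
      (sum_nonneg fun k _ => (hS0 k n ω).trans (hSN k n ω))).ne']
    exact abs_pooled_sub_le (by simp) (hcpos n).le (hS0 · n ω) (hSN · n ω)
      (hθhat j · n ω) hn fun k hk => (mem_filter.1 hk).2
  simpa using (squeeze_zero_norm' hclose hclim).add (hθω hNω)

theorem stmt10
    {Ω : Type*} [MeasurableSpace Ω] (μ : Measure Ω) [IsProbabilityMeasure μ]
    (H J : ℕ) (hH : 1 ≤ H) (hJ : 2 ≤ J)
    (Z : ℕ → Ω → Fin H) (δ : ℕ → Ω → Fin J) (Y : ℕ → Ω → ℝ)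
    (p : Fin H → ℝ)
    (hZmeas : ∀ i, Measurable (Z i)) (hδmeas : ∀ i, Measurable (δ i))
    (hYmeas : ∀ i, Measurable (Y i))
    (hY01 : ∀ i ω, Y i ω = 0 ∨ Y i ω = 1)
    (hp : ∀ h, 0 < p h)
    (𝓕 : ℕ → MeasurableSpace Ω)
    (h𝓕 : ∀ n, 𝓕 n = ⨆ i ∈ Finset.range n,
      (MeasurableSpace.comap (Z i) ⊤ ⊔ MeasurableSpace.comap (δ i) ⊤ ⊔ MeasurableSpace.comap (Y i) ⊤))
    (hZlaw : ∀ i h, μ {ω | Z i ω = h} = ENNReal.ofReal (p h))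
    (hZindep : ∀ i, Indep (MeasurableSpace.comap (Z i) ⊤) (𝓕 i) μ)
    (θ : Fin J → Fin H → ℝ)
    (hθmem : ∀ j h, θ j h ∈ Set.Ioo (0:ℝ) 1)
    (hYcond : ∀ i, μ[Y i | 𝓕 i ⊔ MeasurableSpace.comap (fun ω => (Z i ω, δ i ω)) ⊤]
        =ᵐ[μ] fun ω => θ (δ i ω) (Z i ω))
    (S N : Fin J → Fin H → ℕ → Ω → ℝ)
    (hS : ∀ j h n ω, S j h n ω = ∑ i ∈ Finset.range n, if Z i ω = h ∧ δ i ω = j then Y i ω else 0)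
    (hN : ∀ j h n ω, N j h n ω = ∑ i ∈ Finset.range n, if Z i ω = h ∧ δ i ω = j then 1 else 0)
    (θhat : Fin J → Fin H → ℕ → Ω → ℝ)
    (hθhat : ∀ j h n ω, θhat j h n ω = S j h n ω / N j h n ω)
    (c : ℕ → ℝ) (hcpos : ∀ n, 0 < c n) (hcdec : StrictAnti c)
    (hclim : Tendsto c atTop (nhds 0))
    (P : Fin J → Fin H → ℕ → Ω → ℝ)
    (hP : ∀ j h n ω,
      P j h n ω =
        if N j h n ω + ∑ k ∈ (Finset.univ.erase h).filter
            (fun k => |θhat j k n ω - θhat j h n ω| ≤ c n), N j k n ω = 0 then 1/2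
        else (S j h n ω + ∑ k ∈ (Finset.univ.erase h).filter
            (fun k => |θhat j k n ω - θhat j h n ω| ≤ c n), S j k n ω) /
          (N j h n ω + ∑ k ∈ (Finset.univ.erase h).filter
            (fun k => |θhat j k n ω - θhat j h n ω| ≤ c n), N j k n ω))
    :
    ∀ (j : Fin J) (h : Fin H),
      (∀ᵐ ω ∂μ, Tendsto (fun n => N j h n ω) atTop atTop) →
      ∀ᵐ ω ∂μ, Tendsto (fun n => P j h n ω) atTop (nhds (θ j h)) :=
  stmt10_general μ H J Z δ Y hZmeas hδmeas hYmeas hY01 𝓕 h𝓕 θ hYcond S N hS hN θhat hθhat c hcpos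
    hclim P hP
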